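/- arXiv:1007.4509 — 3 statements merged into one kernel-verified Lean document; each statement's English description precedes it below -/
import Mathlib

section
/- Let φ : [0,∞) → [0,1] be a Laplace transform of a probability distribution on [0,∞) and suppose φ(t) ≤ E ∏_{|v|=n} φ(L(v)t) for all t ≥ 0 and n ≥ 0, where summation/products range over vertices with L(v)>0. Suppose the maximal weight L_n* := sup_{|v|=n} L(v) converges almost surely to a finite limit L*_∞. Then for all t > 0, φ(t) ≤ E exp( −t · D_1(L*_∞ t) · W^{(1)} ), where D_1(s) = (1−φ(s))/s (with D_1(0) = lim_{s↓0} D_1(s)), W^{(1)} = liminf_n Σ_{|v|=n} L(v), and the convention 0·∞ := 0 is used. -/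
/-!
By subharmonicity and `x ≤ e^{x-1}` (i.e. `log (1 + x) ≤ x`),
`φ(t) ≤ E exp(-Σ_{|v|=n} (1 - φ(L(v) t)))`. Since `D1` is antitone (an average of the antitone
maps `s ↦ (1 - e^{-s x}) / s`) and `L(v) ≤ L_n*`, each term satisfies
`1 - φ(L(v) t) = L(v) t D1(L(v) t) ≥ L(v) t D1(L_n* t)`, hence
`φ(t) ≤ E exp(-t D1(L_n* t) Σ_{|v|=n} L(v))`. The integrands are bounded by `1`, so the reverse
Fatou lemma lets `n → ∞`; continuity of `D1` and `liminf (a_n b_n) ≥ lim a_n · liminf b_n` turn the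
limit superior of the integrands into `exp(-t D1(L*_∞ t) W^{(1)})`.
-/

open MeasureTheory ProbabilityTheory ENNReal NNReal Filter

noncomputable section

abbrev UHTree := List ℕ

/-- The branch weight `L(v)`: `L(∅) = 1`, `L(vi) = L(v) T_i(v)`. -/
def branchL {Ω : Type*} : (UHTree → ℕ → Ω → ℝ≥0∞) → UHTree → Ω → ℝ≥0∞
  | _, [], _ => 1
  | T, i :: v, ω => T (.nil) i ω * branchL (fun u j => T (i :: u) j) v ω

/-- The random pair `(C(v), T(v))` attached to vertex `v`. -/
def pairRV {Ω : Type*} (C : UHTree → Ω → ℝ≥0∞) (T : UHTree → ℕ → Ω → ℝ≥0∞) (v : UHTree)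
    (ω : Ω) : ℝ≥0∞ × (ℕ → ℝ≥0∞) :=
  (C v ω, fun i => T v i ω)

/-- `e^{-y}` for `y ∈ [0,∞]`, with `e^{-∞} = 0`. -/
def eexp (y : ℝ≥0∞) : ℝ := if y = ∞ then 0 else Real.exp (-y.toReal)

/-- The multiplicative martingale
`M_n(t) = exp(-t Σ_{|u|<n} L(u)C(u)) ∏_{|v|=n} ψ(L(v)t)`. -/
def multMart {Ω : Type*} (C : UHTree → Ω → ℝ≥0∞) (T : UHTree → ℕ → Ω → ℝ≥0∞)
    (ψ : ℝ≥0∞ → ℝ) (n : ℕ) (t : ℝ≥0) (ω : Ω) : ℝ :=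
  eexp ((t : ℝ≥0∞) * ∑' u : {u : UHTree // u.length < n}, branchL T u ω * C u ω) *
    ∏' v : {v : UHTree // v.length = n}, ψ (branchL T v ω * t)

/-- The σ-algebra generated by the weights attached to vertices of length `< n`. -/
def treeFiltration {Ω : Type*} (C : UHTree → Ω → ℝ≥0∞) (T : UHTree → ℕ → Ω → ℝ≥0∞)
    (n : ℕ) : MeasurableSpace Ω :=
  ⨆ v : {v : UHTree // v.length < n}, MeasurableSpace.comap (pairRV C T v) inferInstance

/-- Maximal branch weight in generation `n`. -/
def Lstar {Ω : Type*} (T : UHTree → ℕ → Ω → ℝ≥0∞) (n : ℕ) (ω : Ω) : ℝ≥0∞ :=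
  ⨆ v : {v : UHTree // v.length = n}, branchL T v ω

/-- `W^{(1)} = liminf_n Σ_{|v|=n} L(v)`. -/
def Wone {Ω : Type*} (T : UHTree → ℕ → Ω → ℝ≥0∞) (ω : Ω) : ℝ≥0∞ :=
  liminf (fun n => ∑' v : {v : UHTree // v.length = n}, branchL T v ω) atTop

lemma eexp_of_ne_top {y : ℝ≥0∞} (hy : y ≠ ∞) : eexp y = Real.exp (-y.toReal) := if_neg hy

lemma eexp_eq_toReal_exp (y : ℝ≥0∞) : eexp y = (EReal.exp (-(y : EReal))).toReal := by
  induction y using ENNReal.recTopCoe with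
  | top => simp [eexp]
  | coe r =>
    rw [eexp_of_ne_top ENNReal.coe_ne_top, show -((r : ℝ≥0∞) : EReal) = ((-(r : ℝ) : ℝ) : EReal) by
      simp; rfl, EReal.exp_coe, ENNReal.toReal_ofReal (Real.exp_nonneg _)]
    rfl

lemma exp_neg_coe_le_one (y : ℝ≥0∞) : EReal.exp (-(y : EReal)) ≤ 1 :=
  EReal.exp_zero ▸ EReal.exp_monotone (by simpa using EReal.coe_ennreal_nonneg y)

lemma eexp_nonneg (y : ℝ≥0∞) : 0 ≤ eexp y := by
  rw [eexp_eq_toReal_exp]; exact ENNReal.toReal_nonneg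

lemma eexp_le_one (y : ℝ≥0∞) : eexp y ≤ 1 := by
  rw [eexp_eq_toReal_exp]
  exact ENNReal.toReal_le_of_le_ofReal zero_le_one (by simpa using exp_neg_coe_le_one y)

lemma antitone_eexp : Antitone eexp := fun y z h => by
  rw [eexp_eq_toReal_exp, eexp_eq_toReal_exp]
  exact ENNReal.toReal_mono (ne_top_of_le_ne_top one_ne_top (exp_neg_coe_le_one y))
    (EReal.exp_monotone (EReal.neg_le_neg_iff.2 (EReal.coe_ennreal_le_coe_ennreal_iff.2 h)))

lemma continuous_eexp : Continuous eexp := by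
  rw [continuous_iff_continuousAt]
  intro y
  rw [show eexp = fun y : ℝ≥0∞ => (EReal.exp (-(y : EReal))).toReal from funext eexp_eq_toReal_exp,
    ContinuousAt]
  exact (ENNReal.tendsto_toReal (ne_top_of_le_ne_top one_ne_top (exp_neg_coe_le_one y))).comp
    ((ENNReal.continuous_exp.comp (continuous_neg.comp continuous_coe_ennreal_ereal)).tendsto y)

lemma measurable_eexp : Measurable eexp := continuous_eexp.measurable

lemma integrable_eexp_comp {Ω : Type*} [MeasurableSpace Ω] {μ : Measure Ω} [IsFiniteMeasure μ]
    {f : Ω → ℝ≥0∞} (hf : AEMeasurable f μ) : Integrable (fun ω => eexp (f ω)) μ :=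
  Integrable.of_bound (measurable_eexp.comp_aemeasurable hf).aestronglyMeasurable 1
    (ae_of_all _ fun ω => by
      rw [Real.norm_of_nonneg (eexp_nonneg _)]; exact eexp_le_one _)

lemma ofReal_eexp_liminf (e : ℕ → ℝ≥0∞) :
    ENNReal.ofReal (eexp (liminf e atTop)) = limsup (fun n => ENNReal.ofReal (eexp (e n))) atTop :=
  Antitone.map_liminf_of_continuousAt (f := fun y => ENNReal.ofReal (eexp y))
    (fun _ _ h => ENNReal.ofReal_le_ofReal (antitone_eexp h)) e
    (ENNReal.continuous_ofReal.comp continuous_eexp).continuousAt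

lemma multipliable_of_nonneg_of_le_one {ι : Type*} {a : ι → ℝ} (h0 : ∀ i, 0 ≤ a i)
    (h1 : ∀ i, a i ≤ 1) : Multipliable a := by
  classical
  have hanti : Antitone fun F : Finset ι => ∏ i ∈ F, a i := fun F G hFG => by
    dsimp only
    rw [← Finset.prod_sdiff hFG]
    exact mul_le_of_le_one_left (Finset.prod_nonneg fun i _ => h0 i)
      (Finset.prod_le_one (fun i _ => h0 i) (fun i _ => h1 i))
  exact ⟨_, tendsto_atTop_ciInf hanti ⟨0, by
    rintro _ ⟨F, rfl⟩; exact Finset.prod_nonneg fun i _ => h0 i⟩⟩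

lemma tprod_le_eexp_tsum_one_sub {ι : Type*} {a : ι → ℝ} (h0 : ∀ i, 0 ≤ a i)
    (h1 : ∀ i, a i ≤ 1) : ∏' i, a i ≤ eexp (∑' i, ENNReal.ofReal (1 - a i)) := by
  have hfinite : ∀ F : Finset ι,
      ∏ i ∈ F, a i ≤ eexp (∑ i ∈ F, ENNReal.ofReal (1 - a i)) := fun F => by
    rw [← ENNReal.ofReal_sum_of_nonneg fun i _ => sub_nonneg.2 (h1 i),
      eexp_of_ne_top ENNReal.ofReal_ne_top,
      ENNReal.toReal_ofReal (Finset.sum_nonneg fun i _ => sub_nonneg.2 (h1 i)),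
      ← Finset.sum_neg_distrib, Real.exp_sum]
    exact Finset.prod_le_prod (fun i _ => h0 i) fun i _ => by
      linarith [Real.add_one_le_exp (-(1 - a i))]
  exact le_of_tendsto_of_tendsto' (multipliable_of_nonneg_of_le_one h0 h1).hasProd
    ((continuous_eexp.tendsto _).comp ENNReal.summable.hasSum) hfinite

lemma one_sub_exp_neg_mul_div_le {a b : ℝ} (ha : 0 < a) (hab : a ≤ b) (ξ : ℝ) :
    (1 - Real.exp (-(b * ξ))) / b ≤ (1 - Real.exp (-(a * ξ))) / a := by
  have hconv : ConvexOn ℝ Set.univ fun s => Real.exp (s * -ξ) :=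
    convexOn_exp.comp_linearMap (LinearMap.id.smulRight (-ξ))
  have := hconv.secant_mono (a := 0) trivial trivial trivial ha.ne' (ha.trans_le hab).ne' hab
  simp only [zero_mul, neg_zero, Real.exp_zero, sub_zero, mul_neg] at this
  have h := neg_le_neg this
  rwa [← neg_div, ← neg_div, neg_sub, neg_sub] at h

lemma ofReal_one_sub_eexp_mul_div_le {s s' x : ℝ≥0∞} (hs : s ≠ 0) (hss' : s ≤ s') :
    ENNReal.ofReal (1 - eexp (s' * x)) / s' ≤ ENNReal.ofReal (1 - eexp (s * x)) / s := by
  rcases eq_or_ne s' ∞ with rfl | hs'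
  · simp
  have hs'0 : s' ≠ 0 := ne_bot_of_le_ne_bot hs hss'
  rcases eq_or_ne x ∞ with rfl | hx
  · simpa [ENNReal.mul_top hs, ENNReal.mul_top hs'0, eexp] using ENNReal.div_le_div_left hss' 1
  have hstop : s ≠ ∞ := ne_top_of_le_ne_top hs' hss'
  have hspos : 0 < s.toReal := ENNReal.toReal_pos hs hstop
  have key := ENNReal.ofReal_le_ofReal (one_sub_exp_neg_mul_div_le hspos
    (ENNReal.toReal_mono hs' hss') x.toReal)
  rwa [ENNReal.ofReal_div_of_pos hspos, ENNReal.ofReal_div_of_pos (hspos.trans_le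
    (ENNReal.toReal_mono hs' hss')), ENNReal.ofReal_toReal hs', ENNReal.ofReal_toReal hstop,
    ← ENNReal.toReal_mul, ← ENNReal.toReal_mul, ← eexp_of_ne_top (ENNReal.mul_ne_top hs' hx),
    ← eexp_of_ne_top (ENNReal.mul_ne_top hstop hx)] at key

section LaplaceTransform

variable {P : Measure ℝ≥0∞} {φ : ℝ≥0∞ → ℝ}

lemma phi_nonneg (hφ : ∀ y, φ y = ∫ x, eexp (y * x) ∂P) (y : ℝ≥0∞) : 0 ≤ φ y :=
  hφ y ▸ integral_nonneg fun _ => eexp_nonneg _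

lemma phi_le_one [IsProbabilityMeasure P] (hφ : ∀ y, φ y = ∫ x, eexp (y * x) ∂P) (y : ℝ≥0∞) :
    φ y ≤ 1 := by
  rw [hφ]
  calc ∫ x, eexp (y * x) ∂P ≤ ∫ _, (1 : ℝ) ∂P :=
        integral_mono (integrable_eexp_comp (measurable_const_mul y).aemeasurable)
          (integrable_const 1) fun _ => eexp_le_one _
    _ = 1 := by simp

-- `s ↦ s * x` is continuous at `s ≠ 0` even for `x = ∞`.
lemma continuousAt_phi [IsFiniteMeasure P] (hφ : ∀ y, φ y = ∫ x, eexp (y * x) ∂P)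
    {s : ℝ≥0∞} (hs : s ≠ 0) : ContinuousAt φ s := by
  rw [show φ = fun y => ∫ x, eexp (y * x) ∂P from funext hφ]
  refine tendsto_integral_filter_of_dominated_convergence (fun _ => 1)
    (Eventually.of_forall fun y =>
      (measurable_eexp.comp (measurable_const_mul y)).aestronglyMeasurable)
    (Eventually.of_forall fun y => ae_of_all _ fun x => by
      rw [Real.norm_of_nonneg (eexp_nonneg _)]; exact eexp_le_one _)
    (integrable_const 1) (ae_of_all _ fun x => ?_)
  exact (continuous_eexp.tendsto _).comp (ENNReal.Tendsto.mul_const tendsto_id (Or.inl hs))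

lemma ofReal_one_sub_phi [IsProbabilityMeasure P] (hφ : ∀ y, φ y = ∫ x, eexp (y * x) ∂P)
    (y : ℝ≥0∞) : ENNReal.ofReal (1 - φ y) = ∫⁻ x, ENNReal.ofReal (1 - eexp (y * x)) ∂P := by
  have hint := integrable_eexp_comp (μ := P) (measurable_const_mul y).aemeasurable
  rw [← ofReal_integral_eq_lintegral_ofReal (f := fun x => 1 - eexp (y * x))
    ((integrable_const 1).sub hint) (ae_of_all _ fun x => sub_nonneg.2 (eexp_le_one _)),
    integral_sub (integrable_const 1) hint, hφ]
  simp

end LaplaceTransform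

section D1

variable {P : Measure ℝ≥0∞} {φ : ℝ≥0∞ → ℝ} {D1 : ℝ≥0∞ → ℝ≥0∞}

-- `D1 s` is the `P`-average of `(1 - e^{-s x}) / s`, which is antitone in `s` for each `x`.
lemma D1_le_of_ne_zero [IsProbabilityMeasure P] (hφ : ∀ y, φ y = ∫ x, eexp (y * x) ∂P)
    (hD1 : ∀ s : ℝ≥0∞, s ≠ 0 → D1 s = ENNReal.ofReal (1 - φ s) / s)
    {s s' : ℝ≥0∞} (hs : s ≠ 0) (hss' : s ≤ s') : D1 s' ≤ D1 s := by
  have hs' : s' ≠ 0 := ne_bot_of_le_ne_bot hs hss'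
  rw [hD1 s hs, hD1 s' hs', ofReal_one_sub_phi hφ, ofReal_one_sub_phi hφ, div_eq_mul_inv,
    div_eq_mul_inv, ← lintegral_mul_const' _ _ (ENNReal.inv_ne_top.2 hs'),
    ← lintegral_mul_const' _ _ (ENNReal.inv_ne_top.2 hs)]
  exact lintegral_mono fun x => by
    simpa only [div_eq_mul_inv] using ofReal_one_sub_eexp_mul_div_le (x := x) hs hss'

lemma antitone_D1 [IsProbabilityMeasure P] (hφ : ∀ y, φ y = ∫ x, eexp (y * x) ∂P)
    (hD1 : ∀ s : ℝ≥0∞, s ≠ 0 → D1 s = ENNReal.ofReal (1 - φ s) / s)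
    (hD10 : Tendsto D1 (nhdsWithin 0 (Set.Ioi 0)) (nhds (D1 0))) : Antitone D1 := by
  intro s s' hss'
  rcases eq_or_ne s 0 with rfl | hs
  · rcases eq_or_ne s' 0 with rfl | hs'
    · exact le_rfl
    · refine ge_of_tendsto hD10 ?_
      filter_upwards [inter_mem_nhdsWithin (Set.Ioi 0) (Iio_mem_nhds (pos_iff_ne_zero.2 hs'))]
        with u hu
      exact D1_le_of_ne_zero hφ hD1 (pos_iff_ne_zero.1 hu.1) hu.2.le
  · exact D1_le_of_ne_zero hφ hD1 hs hss'

lemma continuous_D1 [IsFiniteMeasure P] (hφ : ∀ y, φ y = ∫ x, eexp (y * x) ∂P)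
    (hD1 : ∀ s : ℝ≥0∞, s ≠ 0 → D1 s = ENNReal.ofReal (1 - φ s) / s)
    (hD10 : Tendsto D1 (nhdsWithin 0 (Set.Ioi 0)) (nhds (D1 0))) : Continuous D1 := by
  rw [continuous_iff_continuousAt]
  intro s
  rcases eq_or_ne s 0 with rfl | hs
  · have h : ContinuousWithinAt D1 (Set.Ici 0) 0 := continuousWithinAt_Ioi_iff_Ici.1 hD10
    rwa [← ENNReal.bot_eq_zero, Set.Ici_bot, continuousWithinAt_univ] at h
  · have hev : D1 =ᶠ[nhds s] fun s => ENNReal.ofReal (1 - φ s) / s :=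
      eventually_ne_nhds hs |>.mono hD1
    rw [continuousAt_congr hev]
    exact ENNReal.Tendsto.div ((ENNReal.continuous_ofReal.tendsto _).comp
      (tendsto_const_nhds.sub (continuousAt_phi hφ hs))) (Or.inr hs) tendsto_id
      (Or.inr ENNReal.ofReal_ne_top)

lemma mul_D1_le_ofReal_one_sub
    (hD1 : ∀ s : ℝ≥0∞, s ≠ 0 → D1 s = ENNReal.ofReal (1 - φ s) / s) (hanti : Antitone D1)
    {s M : ℝ≥0∞} (hsM : s ≤ M) : s * D1 M ≤ ENNReal.ofReal (1 - φ s) := by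
  rcases eq_or_ne s 0 with rfl | hs
  · simp
  rcases eq_or_ne s ∞ with rfl | hstop
  · rw [top_le_iff.1 hsM, hD1 ∞ top_ne_zero, ENNReal.div_top, mul_zero]
    exact zero_le
  calc s * D1 M ≤ s * D1 s := mul_le_mul_right (hanti hsM) s
    _ = ENNReal.ofReal (1 - φ s) := by rw [hD1 s hs, ENNReal.mul_div_cancel hs hstop]

end D1

lemma tprod_phi_le_eexp {P : Measure ℝ≥0∞} [IsProbabilityMeasure P] {φ : ℝ≥0∞ → ℝ}
    {D1 : ℝ≥0∞ → ℝ≥0∞} (hφ : ∀ y, φ y = ∫ x, eexp (y * x) ∂P)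
    (hD1 : ∀ s : ℝ≥0∞, s ≠ 0 → D1 s = ENNReal.ofReal (1 - φ s) / s) (hanti : Antitone D1)
    {ι : Type*} (ℓ : ι → ℝ≥0∞) {M : ℝ≥0∞} (hℓ : ∀ i, ℓ i ≤ M) (t : ℝ≥0∞) :
    ∏' i, φ (ℓ i * t) ≤ eexp (t * D1 (M * t) * ∑' i, ℓ i) := by
  refine (tprod_le_eexp_tsum_one_sub (fun i => phi_nonneg hφ _) fun i => phi_le_one hφ _).trans
    (antitone_eexp ?_)
  rw [← ENNReal.tsum_mul_left]
  refine ENNReal.tsum_le_tsum fun i => ?_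
  calc t * D1 (M * t) * ℓ i = ℓ i * t * D1 (M * t) := by ring
    _ ≤ ENNReal.ofReal (1 - φ (ℓ i * t)) :=
      mul_D1_le_ofReal_one_sub hD1 hanti (mul_le_mul_left (hℓ i) t)

lemma measurable_branchL {Ω : Type*} [MeasurableSpace Ω] :
    ∀ (v : UHTree) (T : UHTree → ℕ → Ω → ℝ≥0∞), (∀ u i, Measurable (T u i)) →
      Measurable (branchL T v)
  | [], _, _ => measurable_const
  | i :: v, _, hT => (hT [] i).mul (measurable_branchL v _ fun u j => hT (i :: u) j)

-- Reverse Fatou lemma, with the constant `K` as dominating function.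
lemma le_integral_of_le_integral_of_limsup_le {Ω : Type*} [MeasurableSpace Ω] {μ : Measure Ω}
    [IsFiniteMeasure μ] {g : ℕ → Ω → ℝ} {h : Ω → ℝ} {c K : ℝ} (hg : ∀ n, Measurable (g n))
    (hg0 : ∀ n ω, 0 ≤ g n ω) (hgK : ∀ n ω, g n ω ≤ K) (hh : Integrable h μ) (hh0 : ∀ ω, 0 ≤ h ω)
    (hc : ∀ n, c ≤ ∫ ω, g n ω ∂μ)
    (hlim : ∀ᵐ ω ∂μ, limsup (fun n => ENNReal.ofReal (g n ω)) atTop ≤ ENNReal.ofReal (h ω)) :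
    c ≤ ∫ ω, h ω ∂μ := by
  have hgint : ∀ n, Integrable (g n) μ := fun n =>
    Integrable.of_bound (hg n).aestronglyMeasurable K (ae_of_all _ fun ω => by
      rw [Real.norm_of_nonneg (hg0 n ω)]; exact hgK n ω)
  rw [← ENNReal.ofReal_le_ofReal_iff (integral_nonneg hh0),
    ofReal_integral_eq_lintegral_ofReal hh (ae_of_all _ hh0)]
  calc ENNReal.ofReal c
      ≤ limsup (fun n => ∫⁻ ω, ENNReal.ofReal (g n ω) ∂μ) atTop :=
        le_limsup_of_frequently_le (Frequently.of_forall fun n => by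
          rw [← ofReal_integral_eq_lintegral_ofReal (hgint n) (ae_of_all _ (hg0 n))]
          exact ENNReal.ofReal_le_ofReal (hc n))
    _ ≤ ∫⁻ ω, limsup (fun n => ENNReal.ofReal (g n ω)) atTop ∂μ :=
        limsup_lintegral_le (fun _ => ENNReal.ofReal K)
          (fun n => ENNReal.measurable_ofReal.comp (hg n))
          (fun n => ae_of_all _ fun ω => ENNReal.ofReal_le_ofReal (hgK n ω))
          (by simpa using ENNReal.mul_ne_top ENNReal.ofReal_ne_top (measure_ne_top μ _))
    _ ≤ ∫⁻ ω, ENNReal.ofReal (h ω) ∂μ := lintegral_mono_ae hlim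

lemma limsup_ofReal_eexp_mul_le {u : ℕ → ℝ≥0∞} {a : ℝ≥0∞} (hu : Tendsto u atTop (nhds a))
    (S : ℕ → ℝ≥0∞) :
    limsup (fun n => ENNReal.ofReal (eexp (u n * S n))) atTop ≤
      ENNReal.ofReal (eexp (a * liminf S atTop)) := by
  rw [← ofReal_eexp_liminf]
  refine ENNReal.ofReal_le_ofReal (antitone_eexp ?_)
  calc a * liminf S atTop = liminf u atTop * liminf S atTop := by rw [hu.liminf_eq]
    _ ≤ liminf (fun n => u n * S n) atTop := ENNReal.le_liminf_mul

theorem subharmonic_laplace_bound_general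
    {Ω : Type*} [MeasurableSpace Ω] (μ : Measure Ω) [IsProbabilityMeasure μ]
    (C : UHTree → Ω → ℝ≥0∞) (T : UHTree → ℕ → Ω → ℝ≥0∞)
    (hmeas : ∀ v, Measurable (pairRV C T v))
    (P : Measure ℝ≥0∞) [IsProbabilityMeasure P]
    (φ : ℝ≥0∞ → ℝ) (hφ : ∀ y, φ y = ∫ x, eexp (y * x) ∂P)
    (hsub : ∀ (t : ℝ≥0) (n : ℕ),
      φ t ≤ ∫ ω, ∏' v : {v : UHTree // v.length = n}, φ (branchL T v ω * t) ∂μ)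
    -- a.s. convergence of the maximal weight to a finite limit
    (Linf : Ω → ℝ≥0∞)
    (hLinf : ∀ᵐ ω ∂μ,
      Tendsto (fun n => Lstar T n ω) atTop (nhds (Linf ω)) ∧ Linf ω < ∞)
    -- `D1(s) = (1 - φ(s))/s` for `s > 0`, extended by its limit at `0`
    (D1 : ℝ≥0∞ → ℝ≥0∞)
    (hD1 : ∀ s : ℝ≥0∞, s ≠ 0 → D1 s = ENNReal.ofReal (1 - φ s) / s)
    (hD10 : Tendsto D1 (nhdsWithin 0 (Set.Ioi 0)) (nhds (D1 0))) :
    ∀ t : ℝ≥0, 0 < t →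
      φ t ≤ ∫ ω, eexp ((t : ℝ≥0∞) * D1 (Linf ω * t) * Wone T ω) ∂μ := by
  intro t _
  have hanti := antitone_D1 hφ hD1 hD10
  have hL : ∀ v, Measurable (branchL T v) := fun v => measurable_branchL v T fun u i =>
    (measurable_pi_apply i).comp (measurable_snd.comp (hmeas u))
  have hS : ∀ n, Measurable fun ω => ∑' v : {v : UHTree // v.length = n}, branchL T v ω :=
    fun n => Measurable.tsum fun v => hL v
  have hLstar : ∀ n, Measurable (Lstar T n) := fun n => Measurable.iSup fun v => hL v
  have hG : ∀ n, Measurable fun ω =>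
      t * D1 (Lstar T n ω * t) * ∑' v : {v : UHTree // v.length = n}, branchL T v ω :=
    fun n => (measurable_const.mul (hanti.measurable.comp ((hLstar n).mul_const _))).mul (hS n)
  have hbound : ∀ n, φ t ≤ ∫ ω,
      eexp (t * D1 (Lstar T n ω * t) * ∑' v : {v : UHTree // v.length = n}, branchL T v ω) ∂μ :=
    fun n => (hsub t n).trans <| integral_mono_of_nonneg
      (ae_of_all _ fun ω => tprod_nonneg fun v => phi_nonneg hφ _)
      (integrable_eexp_comp (hG n).aemeasurable) (ae_of_all _ fun ω =>
        tprod_phi_le_eexp hφ hD1 hanti _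
          (le_iSup fun v : {v : UHTree // v.length = n} => branchL T v ω) _)
  have hlimit : ∀ᵐ ω ∂μ, limsup (fun n => ENNReal.ofReal (eexp (t * D1 (Lstar T n ω * t) *
      ∑' v : {v : UHTree // v.length = n}, branchL T v ω))) atTop ≤
        ENNReal.ofReal (eexp (t * D1 (Linf ω * t) * Wone T ω)) := by
    filter_upwards [hLinf] with ω hω
    exact limsup_ofReal_eexp_mul_le (ENNReal.Tendsto.const_mul
      (((continuous_D1 hφ hD1 hD10).tendsto _).comp
        (ENNReal.Tendsto.mul_const hω.1 (Or.inr ENNReal.coe_ne_top))) (Or.inr ENNReal.coe_ne_top)) _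
  have hLinfm : AEMeasurable Linf μ := aemeasurable_of_tendsto_metrizable_ae'
    (fun n => (hLstar n).aemeasurable) (hLinf.mono fun _ h => h.1)
  have hint : Integrable (fun ω => eexp (t * D1 (Linf ω * t) * Wone T ω)) μ :=
    integrable_eexp_comp ((aemeasurable_const.mul (hanti.measurable.comp_aemeasurable
      (hLinfm.mul_const _))).mul (Measurable.liminf hS).aemeasurable)
  exact le_integral_of_le_integral_of_limsup_le (fun n => measurable_eexp.comp (hG n))
    (fun _ _ => eexp_nonneg _) (fun _ _ => eexp_le_one _) hint (fun _ => eexp_nonneg _)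
    hbound hlimit

theorem subharmonic_laplace_bound
    {Ω : Type*} [MeasurableSpace Ω] (μ : Measure Ω) [IsProbabilityMeasure μ]
    (C : UHTree → Ω → ℝ≥0∞) (T : UHTree → ℕ → Ω → ℝ≥0∞)
    (hmeas : ∀ v, Measurable (pairRV C T v))
    (hindep : iIndepFun (pairRV C T) μ)
    (hident : ∀ v, IdentDistrib (pairRV C T v) (pairRV C T (.nil)) μ μ)
    (P : Measure ℝ≥0∞) [IsProbabilityMeasure P] (hPtop : P {∞} = 0)
    (φ : ℝ≥0∞ → ℝ) (hφ : ∀ y, φ y = ∫ x, eexp (y * x) ∂P)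
    (hsub : ∀ (t : ℝ≥0) (n : ℕ),
      φ t ≤ ∫ ω, ∏' v : {v : UHTree // v.length = n}, φ (branchL T v ω * t) ∂μ)
    -- a.s. convergence of the maximal weight to a finite limit
    (Linf : Ω → ℝ≥0∞)
    (hLinf : ∀ᵐ ω ∂μ,
      Tendsto (fun n => Lstar T n ω) atTop (nhds (Linf ω)) ∧ Linf ω < ∞)
    -- `D1(s) = (1 - φ(s))/s` for `s > 0`, extended by its limit at `0`
    (D1 : ℝ≥0∞ → ℝ≥0∞)
    (hD1 : ∀ s : ℝ≥0∞, s ≠ 0 → D1 s = ENNReal.ofReal (1 - φ s) / s)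
    (hD10 : Tendsto D1 (nhdsWithin 0 (Set.Ioi 0)) (nhds (D1 0))) :
    ∀ t : ℝ≥0, 0 < t →
      φ t ≤ ∫ ω, eexp ((t : ℝ≥0∞) * D1 (Linf ω * t) * Wone T ω) ∂μ :=
  subharmonic_laplace_bound_general μ C T hmeas P φ hφ hsub Linf hLinf D1 hD1 hD10
end
end

section
/- Let m(θ) := E Σ_{i≥1} T_i^θ 1{T_i > 0} and suppose inf_{θ∈[0,1]} m(θ) > 1, where m(θ) may be +∞. For a ∈ ℕ define the truncated sequence with entries min(a, T_i) for i ≤ a and 0 for i > a, and let m_a denote the corresponding function m_a(θ) = E Σ_{i=1}^{a} min(a,T_i)^θ 1{min(a,T_i)>0}. Then there exists a ∈ ℕ such that inf_{θ∈[0,1]} m_a(θ) > 1. -/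
open MeasureTheory NNReal ENNReal

noncomputable section

/-! Truncation makes every `m_a` continuous on `[0, 1]`: the integrand is bounded by
`a * max a 1`, so dominated convergence applies. By monotone convergence `m_a` increases to `m`,
so the open sets `{θ | 1 < m_a θ}` form an increasing cover of the compact interval `[0, 1]`;
one of them is the whole interval, and there the infimum of `m_a` is attained, hence `> 1`. -/

open Filter Topology Set

theorem exists_lt_iInf_of_monotone_of_continuous {ι X α : Type*} [Preorder ι]
    [IsDirectedOrder ι] [Nonempty ι] [TopologicalSpace X] [CompactSpace X] [Nonempty X]
    [ConditionallyCompleteLinearOrder α] [TopologicalSpace α] [OrderTopology α]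
    {f : ι → X → α} (hf : ∀ i, Continuous (f i)) (hmono : Monotone f) {c : α}
    (hc : ∀ x, ∃ i, c < f i x) : ∃ i, c < ⨅ x, f i x := by
  obtain ⟨i, hi⟩ := isCompact_univ.elim_directed_cover (fun i => {x | c < f i x})
    (fun i => isOpen_lt continuous_const (hf i)) (fun x _ => mem_iUnion.2 (hc x))
    (Monotone.directed_le fun i j hij x hx => lt_of_lt_of_le hx (hmono hij x))
  refine ⟨i, ?_⟩
  have h := (isCompact_univ.lt_sInf_iff_of_continuous univ_nonempty (hf i).continuousOn c).2 hi
  rwa [image_univ] at h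

def posRpow (θ : ℝ) (x : ℝ≥0∞) : ℝ≥0∞ := if 0 < x then x ^ θ else 0

section posRpow

variable {θ : ℝ} {x : ℝ≥0∞}

theorem posRpow_mono (hθ : 0 ≤ θ) : Monotone (posRpow θ) := by
  intro x y hxy
  by_cases hx : 0 < x
  · simp only [posRpow, if_pos hx, if_pos (hx.trans_le hxy)]
    exact ENNReal.rpow_le_rpow hxy hθ
  · simp [posRpow, hx]

theorem posRpow_le_max_one (hθ₀ : 0 ≤ θ) (hθ₁ : θ ≤ 1) (x : ℝ≥0∞) : posRpow θ x ≤ max x 1 := by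
  unfold posRpow
  split_ifs
  · rcases le_total x 1 with h | h
    · exact (ENNReal.rpow_le_one h hθ₀).trans (le_max_right _ _)
    · calc x ^ θ ≤ x ^ (1 : ℝ) := ENNReal.rpow_le_rpow_of_exponent_le h hθ₁
        _ ≤ max x 1 := by simp
  · exact bot_le

theorem measurable_posRpow (θ : ℝ) : Measurable (posRpow θ) :=
  Measurable.ite (measurableSet_lt measurable_const measurable_id)
    ENNReal.continuous_rpow_const.measurable measurable_const

theorem continuous_const_posRpow (hx : x ≠ ∞) : Continuous fun θ => posRpow θ x := by
  rcases eq_zero_or_pos x with rfl | hx₀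
  · simpa [posRpow] using continuous_const
  · simp only [posRpow, if_pos hx₀]
    rw [← ENNReal.ofReal_toReal hx]
    have hr : 0 < x.toReal := ENNReal.toReal_pos hx₀.ne' hx
    simp only [ENNReal.ofReal_rpow_of_pos hr]
    exact ENNReal.continuous_ofReal.comp (Real.continuous_const_rpow hr.ne')

theorem continuousAt_posRpow (hx : 0 < x) : ContinuousAt (posRpow θ) x :=
  ENNReal.continuous_rpow_const.continuousAt.congr <|
    (eventually_gt_nhds hx).mono fun _ hy => (if_pos hy).symm

theorem iSup_posRpow_min_natCast (hθ : 0 ≤ θ) (x : ℝ≥0∞) :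
    ⨆ b : ℕ, posRpow θ (min (b : ℝ≥0∞) x) = posRpow θ x := by
  rcases eq_zero_or_pos x with rfl | hx
  · simp [posRpow]
  · have hsup : ⨆ b : ℕ, min (b : ℝ≥0∞) x = x := by
      rw [← iSup_inf_eq, ENNReal.iSup_natCast, top_inf_eq]
    have hcont : ContinuousAt (posRpow θ) (⨆ b : ℕ, min (b : ℝ≥0∞) x) := by
      rw [hsup]; exact continuousAt_posRpow hx
    rw [← (posRpow_mono hθ).map_iSup_of_continuousAt hcont (by simp [posRpow]), hsup]

end posRpow

def truncSum (x : ℕ → ℝ≥0∞) (θ : ℝ) (n b : ℕ) : ℝ≥0∞ :=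
  ∑ i ∈ Finset.range n, posRpow θ (min (b : ℝ≥0∞) (x i))

section truncSum

variable {x : ℕ → ℝ≥0∞} {θ : ℝ}

theorem truncSum_mono (hθ : 0 ≤ θ) {n n' b b' : ℕ} (hn : n ≤ n') (hb : b ≤ b') :
    truncSum x θ n b ≤ truncSum x θ n' b' := by
  calc truncSum x θ n b ≤ ∑ i ∈ Finset.range n, posRpow θ (min (b' : ℝ≥0∞) (x i)) :=
        Finset.sum_le_sum fun i _ =>
          posRpow_mono hθ (min_le_min_right _ (Nat.cast_le.2 hb))
    _ ≤ truncSum x θ n' b' := Finset.sum_le_sum_of_subset (Finset.range_subset_range.2 hn)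

theorem truncSum_diag_mono (hθ : 0 ≤ θ) : Monotone fun a => truncSum x θ a a :=
  fun _ _ h => truncSum_mono hθ h h

/-- Growing the number of terms and the truncation level together gives the same supremum as
growing them one after the other. -/
theorem iSup_truncSum_diag (hθ : 0 ≤ θ) :
    ⨆ a, truncSum x θ a a = ∑' i, posRpow θ (x i) := by
  have hmono : Monotone fun p : ℕ × ℕ => truncSum x θ p.1 p.2 :=
    fun _ _ h => truncSum_mono hθ h.1 h.2
  rw [hmono.iSup_comp_tendsto_atTop tendsto_atTop_diagonal, iSup_prod,
    ENNReal.tsum_eq_iSup_nat]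
  refine iSup_congr fun n => ?_
  simp only [truncSum]
  rw [← ENNReal.finsetSum_iSup_of_monotone
    (f := fun i (b : ℕ) => posRpow θ (min (b : ℝ≥0∞) (x i))) fun _ _ _ hb =>
      posRpow_mono hθ (min_le_min_right _ (Nat.cast_le.2 hb))]
  simp only [iSup_posRpow_min_natCast hθ]

theorem truncSum_le (hθ₀ : 0 ≤ θ) (hθ₁ : θ ≤ 1) (n b : ℕ) :
    truncSum x θ n b ≤ n * max (b : ℝ≥0∞) 1 := by
  calc truncSum x θ n b ≤ ∑ _i ∈ Finset.range n, max (b : ℝ≥0∞) 1 :=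
        Finset.sum_le_sum fun _ _ =>
          (posRpow_le_max_one hθ₀ hθ₁ _).trans (max_le_max_right _ (min_le_left _ _))
    _ = n * max (b : ℝ≥0∞) 1 := by simp

theorem continuous_truncSum (x : ℕ → ℝ≥0∞) (n b : ℕ) : Continuous fun θ => truncSum x θ n b :=
  continuous_finsetSum _ fun _ _ =>
    continuous_const_posRpow (min_lt_of_left_lt (natCast_lt_top b)).ne

theorem measurable_truncSum {Ω : Type*} [MeasurableSpace Ω] {T : ℕ → Ω → ℝ≥0∞}
    (hT : ∀ i, Measurable (T i)) (θ : ℝ) (n b : ℕ) : Measurable fun ω => truncSum (T · ω) θ n b :=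
  Finset.measurable_sum _ fun i _ => (measurable_posRpow θ).comp (measurable_const.min (hT i))

end truncSum

section lintegral

variable {Ω : Type*} [MeasurableSpace Ω] {μ : Measure Ω} {T : ℕ → Ω → ℝ≥0∞}

theorem continuous_lintegral_truncSum [IsFiniteMeasure μ] (hT : ∀ i, Measurable (T i)) (n b : ℕ) :
    Continuous fun θ : Icc (0 : ℝ) 1 => ∫⁻ ω, truncSum (T · ω) θ n b ∂μ := by
  refine continuous_iff_continuousAt.2 fun θ => ?_
  refine tendsto_lintegral_filter_of_dominated_convergence (fun _ => n * max (b : ℝ≥0∞) 1)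
    (.of_forall fun θ => measurable_truncSum hT θ n b)
    (.of_forall fun θ => .of_forall fun ω => truncSum_le θ.2.1 θ.2.2 n b)
    (lintegral_const_lt_top <|
      mul_ne_top (natCast_ne_top n) (max_ne_top (natCast_ne_top b) one_ne_top)).ne
    (.of_forall fun ω => ?_)
  exact ((continuous_truncSum _ n b).comp continuous_subtype_val).continuousAt

theorem iSup_lintegral_truncSum_diag (hT : ∀ i, Measurable (T i)) {θ : ℝ} (hθ : 0 ≤ θ) :
    ⨆ a, ∫⁻ ω, truncSum (T · ω) θ a a ∂μ = ∫⁻ ω, ∑' i, posRpow θ (T i ω) ∂μ := by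
  rw [← lintegral_iSup (f := fun a ω => truncSum (T · ω) θ a a)
    (fun a => measurable_truncSum hT θ a a)
    fun a a' h ω => truncSum_diag_mono (x := (T · ω)) hθ h]
  simp only [iSup_truncSum_diag hθ]

end lintegral

theorem truncated_m_inf_gt_one
    {Ω : Type*} [MeasurableSpace Ω] (μ : Measure Ω) [IsProbabilityMeasure μ]
    (T : ℕ → Ω → ℝ≥0∞) (hmeas : ∀ i, Measurable (T i))
    (m : ℝ → ℝ≥0∞)
    (hm : ∀ θ : ℝ, m θ = ∫⁻ ω, ∑' i : ℕ,
      (if 0 < T i ω then T i ω ^ θ else 0) ∂μ)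
    (ma : ℕ → ℝ → ℝ≥0∞)
    (hma : ∀ (a : ℕ) (θ : ℝ), ma a θ = ∫⁻ ω, ∑ i ∈ Finset.range a,
      (if 0 < min (a : ℝ≥0∞) (T i ω) then min (a : ℝ≥0∞) (T i ω) ^ θ else 0) ∂μ)
    (hinf : 1 < ⨅ θ : Set.Icc (0 : ℝ) 1, m θ) :
    ∃ a : ℕ, 1 < ⨅ θ : Set.Icc (0 : ℝ) 1, ma a θ := by
  have hma' : ma = fun a θ => ∫⁻ ω, truncSum (T · ω) θ a a ∂μ := funext₂ hma
  have hm' : m = fun θ => ∫⁻ ω, ∑' i, posRpow θ (T i ω) ∂μ := funext hm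
  subst hma' hm'
  have : Nonempty (Icc (0 : ℝ) 1) := nonempty_Icc_subtype zero_le_one
  refine exists_lt_iInf_of_monotone_of_continuous
    (fun a => continuous_lintegral_truncSum hmeas a a)
    (fun _ _ h θ => lintegral_mono fun ω => truncSum_diag_mono θ.2.1 h) fun θ => ?_
  rw [← lt_iSup_iff, iSup_lintegral_truncSum_diag hmeas θ.2.1]
  exact hinf.trans_le (iInf_le _ θ)
end
end

section
/- Suppose that almost surely Σ_{i≥1} 1{T_i > 0} ≤ 1 or, more generally, assume the distributional fixed-point equation X ≝ C + T_1 X_1 (a perpetuity equation) with P(T_1 = 1, C = 0) < 1 has the iterated form: for every n, X ≝ Σ_{k=0}^{n-1} Π_{k} C_k + Π_n X_n in distribution, where (C_k, T_{1,k}) are i.i.d. copies of (C,T_1), Π_k = T_{1,0}···T_{1,k-1}, and X_n is independent of the weights. Then any fixed point X stochastically dominates Σ_{k≥0} Π_k C_k, and a fixed point exists if and only if Σ_{k≥0} Π_k C_k < ∞ almost surely. -/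
open MeasureTheory ProbabilityTheory NNReal ENNReal

noncomputable section

/-- `P` is a fixed point of the perpetuity equation `X ≝ C + T₁ X₁` associated with
the law `κ` of the pair `(C, T₁)`: on some probability space there are a copy
`(C', T')` of `(C, T₁)` and a random variable `X'` with law `P` independent of
`(C', T')` such that `C' + T' X'` has law `P`. -/
def IsPerpetuityFixedPoint (κ : Measure (ℝ≥0∞ × ℝ≥0∞)) (P : Measure ℝ≥0∞) : Prop :=
  ∃ (Ω' : Type) (_ : MeasurableSpace Ω') (μ' : Measure Ω') (_ : IsProbabilityMeasure μ')
    (CT : Ω' → ℝ≥0∞ × ℝ≥0∞) (X : Ω' → ℝ≥0∞),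
      Measurable CT ∧ Measurable X ∧
      μ'.map CT = κ ∧ μ'.map X = P ∧
      IndepFun CT X μ' ∧
      μ'.map (fun ω' => (CT ω').1 + (CT ω').2 * X ω') = P

/-!
Write `Φ κ ν` (`perpetuityMap`) for the law of `C + T X` with `(C, T) ∼ κ` independent of
`X ∼ ν`. Splitting off the first term, `W* = C₀ + T₀ W*'`, where `W*'` is built from the shifted
sequence and is therefore independent of `(C₀, T₀)` and distributed as `W*`; so the law of `W*` is
a fixed point of `Φ`, with no atom at `∞` when `W* < ∞` a.s. The same splitting shows that the
`n`-th partial sum has law `Φⁿ δ₀`. As `Φ` is monotone for the stochastic order and `δ₀` is its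
least element, every partial sum, and hence their supremum `W*`, is stochastically dominated by any
fixed point `P`; if `P {∞} = 0` this forces `W* < ∞` a.s.
-/

open Set

section StochasticOrder

variable {α : Type*} [MeasurableSpace α] [Preorder α]

/-- The stochastic order, tested on all measurable upper sets rather than only on the half-lines
`Ioi t`: this makes the monotonicity of `perpetuityMap` immediate. -/
def StochasticallyLE (ν ν' : Measure α) : Prop :=
  ∀ U : Set α, IsUpperSet U → MeasurableSet U → ν U ≤ ν' U

lemma stochasticallyLE_dirac_bot [OrderBot α] (ν : Measure α) [IsProbabilityMeasure ν] :
    StochasticallyLE (Measure.dirac ⊥) ν := by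
  intro U hU hUm
  by_cases hbot : ⊥ ∈ U
  · rw [hU.bot_mem.mp hbot, measure_univ, measure_univ]
  · simp [Measure.dirac_apply' _ hUm, hbot]

end StochasticOrder

def perpetuityMap (κ : Measure (ℝ≥0∞ × ℝ≥0∞)) (ν : Measure ℝ≥0∞) : Measure ℝ≥0∞ :=
  (κ.prod ν).map fun p => p.1.1 + p.1.2 * p.2

instance (κ : Measure (ℝ≥0∞ × ℝ≥0∞)) (ν : Measure ℝ≥0∞) [SFinite κ] [SFinite ν] :
    SFinite (perpetuityMap κ ν) := by
  unfold perpetuityMap; infer_instance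

lemma measurable_perpetuityStep :
    Measurable fun p : (ℝ≥0∞ × ℝ≥0∞) × ℝ≥0∞ => p.1.1 + p.1.2 * p.2 := by
  fun_prop

lemma perpetuityMap_mono (κ : Measure (ℝ≥0∞ × ℝ≥0∞)) {ν ν' : Measure ℝ≥0∞}
    [SFinite ν] [SFinite ν'] (h : StochasticallyLE ν ν') :
    StochasticallyLE (perpetuityMap κ ν) (perpetuityMap κ ν') := by
  intro U hU hUm
  have hpre := measurable_perpetuityStep hUm
  rw [perpetuityMap, perpetuityMap, Measure.map_apply measurable_perpetuityStep hUm,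
    Measure.map_apply measurable_perpetuityStep hUm, Measure.prod_apply hpre,
    Measure.prod_apply hpre]
  refine lintegral_mono fun cs => h _ (fun x y hxy hx => ?_) (measurable_prodMk_left hpre)
  exact hU (add_le_add_right (mul_le_mul_right hxy _) _) hx

lemma StochasticallyLE.iterate_perpetuityMap {κ : Measure (ℝ≥0∞ × ℝ≥0∞)} [SFinite κ]
    {ν P : Measure ℝ≥0∞} [SFinite ν] [SFinite P] (hP : perpetuityMap κ P = P)
    (h : StochasticallyLE ν P) (n : ℕ) :
    StochasticallyLE ((perpetuityMap κ)^[n] ν) P := by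
  induction n generalizing ν with
  | zero => exact h
  | succ n ih =>
    rw [Function.iterate_succ_apply]
    exact ih (hP ▸ perpetuityMap_mono κ h)

lemma isPerpetuityFixedPoint_iff (κ : Measure (ℝ≥0∞ × ℝ≥0∞)) (P : Measure ℝ≥0∞)
    [IsProbabilityMeasure κ] [IsProbabilityMeasure P] :
    IsPerpetuityFixedPoint κ P ↔ perpetuityMap κ P = P := by
  constructor
  · rintro ⟨Ω', _, μ', _, CT, X, hCT, hX, rfl, rfl, hindep, hfix⟩
    rw [perpetuityMap, ← hindep.map_prod_eq_prod_map_map hCT.aemeasurable hX.aemeasurable,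
      Measure.map_map measurable_perpetuityStep (hCT.prodMk hX)]
    exact hfix
  · exact fun hfix => ⟨_, inferInstance, κ.prod P, inferInstance, Prod.fst, Prod.snd,
      measurable_fst, measurable_snd, by simp, by simp,
      indepFun_prod measurable_id measurable_id, hfix⟩

section Series

def perpetuityTerm (x : ℕ → ℝ≥0∞ × ℝ≥0∞) (k : ℕ) : ℝ≥0∞ :=
  (∏ j ∈ Finset.range k, (x j).2) * (x k).1

def perpetuityPartialSum (n : ℕ) (x : ℕ → ℝ≥0∞ × ℝ≥0∞) : ℝ≥0∞ :=
  ∑ k ∈ Finset.range n, perpetuityTerm x k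

def perpetuitySum (x : ℕ → ℝ≥0∞ × ℝ≥0∞) : ℝ≥0∞ :=
  ∑' k, perpetuityTerm x k

variable (x : ℕ → ℝ≥0∞ × ℝ≥0∞)

lemma perpetuityTerm_zero : perpetuityTerm x 0 = (x 0).1 := by
  simp [perpetuityTerm]

lemma perpetuityTerm_succ (k : ℕ) :
    perpetuityTerm x (k + 1) = (x 0).2 * perpetuityTerm (fun j => x (j + 1)) k := by
  rw [perpetuityTerm, perpetuityTerm, Finset.prod_range_succ', mul_comm _ (x 0).2, mul_assoc]

lemma perpetuityPartialSum_succ (n : ℕ) :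
    perpetuityPartialSum (n + 1) x
      = (x 0).1 + (x 0).2 * perpetuityPartialSum n (fun k => x (k + 1)) := by
  rw [perpetuityPartialSum, Finset.sum_range_succ', add_comm, perpetuityPartialSum,
    Finset.mul_sum]
  simp only [perpetuityTerm_succ, perpetuityTerm_zero]

lemma perpetuitySum_eq_add_mul :
    perpetuitySum x = (x 0).1 + (x 0).2 * perpetuitySum (fun k => x (k + 1)) := by
  rw [perpetuitySum, tsum_eq_zero_add' ENNReal.summable, perpetuitySum, ← ENNReal.tsum_mul_left]
  simp only [perpetuityTerm_succ, perpetuityTerm_zero]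

lemma perpetuitySum_eq_iSup : perpetuitySum x = ⨆ n, perpetuityPartialSum n x :=
  ENNReal.tsum_eq_iSup_nat

lemma monotone_perpetuityPartialSum : Monotone fun n => perpetuityPartialSum n x :=
  fun _ _ hmn => Finset.sum_le_sum_of_subset (Finset.range_subset_range.mpr hmn)

lemma measurable_perpetuityTerm (k : ℕ) : Measurable fun x => perpetuityTerm x k := by
  unfold perpetuityTerm; fun_prop

lemma measurable_perpetuityPartialSum (n : ℕ) : Measurable (perpetuityPartialSum n) :=
  Finset.measurable_sum _ fun k _ => measurable_perpetuityTerm k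

lemma measurable_perpetuitySum : Measurable perpetuitySum :=
  Measurable.tsum measurable_perpetuityTerm

end Series

section IID

variable {Ω α : Type*} [MeasurableSpace Ω] [MeasurableSpace α] {μ : Measure Ω}
  {X : ℕ → Ω → α}

lemma ProbabilityTheory.iIndepFun.indepFun_head_tail (hX : ∀ k, Measurable (X k))
    (h : iIndepFun X μ) :
    IndepFun (X 0) (fun ω k => X (k + 1) ω) μ := by
  rw [IndepFun_iff_Indep]
  have hdisj : Disjoint ({0} : Set ℕ) (range Nat.succ) := by
    simp [Set.disjoint_singleton_left]
  refine indep_of_indep_of_le_right (indep_of_indep_of_le_left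
    (indep_iSup_of_disjoint (fun k => (hX k).comap_le) h hdisj) ?_) ?_
  · exact le_biSup (fun k => MeasurableSpace.comap (X k) inferInstance) (mem_singleton 0)
  · let mTail := ⨆ i ∈ range Nat.succ, MeasurableSpace.comap (X i) inferInstance
    have hk (k : ℕ) : Measurable[mTail] (X (k + 1)) :=
      (comap_measurable _).mono
        (le_biSup (fun i => MeasurableSpace.comap (X i) inferInstance) ⟨k, rfl⟩) le_rfl
    exact (@measurable_pi_lambda Ω ℕ (fun _ => α) mTail _ _ hk).comap_le

lemma identDistrib_tail (h : iIndepFun X μ) (hident : ∀ k, IdentDistrib (X k) (X 0) μ μ) :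
    IdentDistrib (fun ω k => X (k + 1) ω) (fun ω k => X k ω) μ μ :=
  IdentDistrib.pi (fun k => (hident (k + 1)).trans (hident k).symm)
    (h.precomp Nat.succ_injective) h

end IID

section Perpetuity

variable {Ω : Type*} [MeasurableSpace Ω] {μ : Measure Ω} [IsProbabilityMeasure μ]
  {X : ℕ → Ω → ℝ≥0∞ × ℝ≥0∞} (hX : ∀ k, Measurable (X k)) (hindep : iIndepFun X μ)
  (hident : ∀ k, IdentDistrib (X k) (X 0) μ μ)
include hX hindep hident

lemma map_perpetuityStep_eq {G : (ℕ → ℝ≥0∞ × ℝ≥0∞) → ℝ≥0∞} (hG : Measurable G) :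
    μ.map (fun ω => (X 0 ω).1 + (X 0 ω).2 * G (fun k => X (k + 1) ω))
      = perpetuityMap (μ.map (X 0)) (μ.map fun ω => G (X · ω)) := by
  have hGtail : Measurable fun ω => G fun k => X (k + 1) ω :=
    hG.comp (measurable_pi_lambda _ fun k => hX (k + 1))
  have hlaw : μ.map (fun ω => G fun k => X (k + 1) ω) = μ.map fun ω => G (X · ω) :=
    ((identDistrib_tail hindep hident).comp hG).map_eq
  have hind : IndepFun (X 0) (fun ω => G fun k => X (k + 1) ω) μ :=
    (hindep.indepFun_head_tail hX).comp measurable_id hG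
  rw [perpetuityMap, ← hlaw,
    ← hind.map_prod_eq_prod_map_map (hX 0).aemeasurable hGtail.aemeasurable,
    Measure.map_map measurable_perpetuityStep ((hX 0).prodMk hGtail)]
  rfl

lemma map_perpetuityPartialSum (n : ℕ) :
    μ.map (fun ω => perpetuityPartialSum n (X · ω))
      = (perpetuityMap (μ.map (X 0)))^[n] (Measure.dirac 0) := by
  induction n with
  | zero => simp [perpetuityPartialSum, Measure.map_const]
  | succ n ih =>
    simp only [perpetuityPartialSum_succ, Function.iterate_succ_apply', ← ih]
    exact map_perpetuityStep_eq hX hindep hident (measurable_perpetuityPartialSum n)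

lemma perpetuityMap_map_perpetuitySum :
    perpetuityMap (μ.map (X 0)) (μ.map fun ω => perpetuitySum (X · ω))
      = μ.map fun ω => perpetuitySum (X · ω) := by
  rw [← map_perpetuityStep_eq hX hindep hident measurable_perpetuitySum]
  exact congrArg (Measure.map · μ) (funext fun ω => (perpetuitySum_eq_add_mul (X · ω)).symm)

lemma measure_lt_perpetuitySum_le {P : Measure ℝ≥0∞} [IsProbabilityMeasure P]
    (hP : perpetuityMap (μ.map (X 0)) P = P) (t : ℝ≥0∞) :
    μ {ω | t < perpetuitySum (X · ω)} ≤ P (Ioi t) := by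
  have hunion : {ω | t < perpetuitySum (X · ω)}
      = ⋃ n, (fun ω => perpetuityPartialSum n (X · ω)) ⁻¹' Ioi t := by
    ext ω
    simp [perpetuitySum_eq_iSup, lt_iSup_iff]
  have hmono : Monotone fun n => (fun ω => perpetuityPartialSum n (X · ω)) ⁻¹' Ioi t :=
    fun m n hmn ω hω => lt_of_lt_of_le hω (monotone_perpetuityPartialSum _ hmn)
  rw [hunion, hmono.measure_iUnion]
  refine iSup_le fun n => ?_
  have hSn : Measurable fun ω => perpetuityPartialSum n (X · ω) :=
    (measurable_perpetuityPartialSum n).comp (measurable_pi_lambda _ hX)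
  rw [← Measure.map_apply hSn measurableSet_Ioi, map_perpetuityPartialSum hX hindep hident]
  exact (stochasticallyLE_dirac_bot P).iterate_perpetuityMap hP n _ (isUpperSet_Ioi t)
    measurableSet_Ioi

lemma ae_perpetuitySum_lt_top {P : Measure ℝ≥0∞} [IsProbabilityMeasure P]
    (hP : perpetuityMap (μ.map (X 0)) P = P) (hPtop : P {∞} = 0) :
    ∀ᵐ ω ∂μ, perpetuitySum (X · ω) < ∞ := by
  refine ae_iff.mpr (le_antisymm ?_ zero_le)
  calc μ {ω | ¬perpetuitySum (X · ω) < ∞}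
      ≤ ⨅ n : ℕ, μ {ω | (n : ℝ≥0∞) < perpetuitySum (X · ω)} :=
        le_iInf fun n => measure_mono fun ω hω => not_lt.mp hω |>.trans_lt' (natCast_lt_top n)
    _ ≤ ⨅ n : ℕ, P (Ioi n) := iInf_mono fun n => measure_lt_perpetuitySum_le hX hindep hident hP n
    _ = 0 := by
        rw [← hPtop, ← iInter_Ioi_coe_nat, Antitone.measure_iInter
          (fun m n hmn => Ioi_subset_Ioi (Nat.cast_le.mpr hmn))
          (fun _ => measurableSet_Ioi.nullMeasurableSet) ⟨0, measure_ne_top _ _⟩]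

end Perpetuity

theorem perpetuity_fixed_points_general
    {Ω : Type*} [MeasurableSpace Ω] (μ : Measure Ω) [IsProbabilityMeasure μ]
    -- i.i.d. copies `(C_k, T_{1,k})` of the pair `(C, T₁)`
    (C T : ℕ → Ω → ℝ≥0∞)
    (hmeas : ∀ k, Measurable fun ω => (C k ω, T k ω))
    (hindep : iIndepFun (fun k ω => (C k ω, T k ω)) μ)
    (hident : ∀ k, IdentDistrib (fun ω => (C k ω, T k ω)) (fun ω => (C 0 ω, T 0 ω)) μ μ) :
    -- with `Π_k = T_{1,0} ⋯ T_{1,k-1}` and `W* = Σ_{k≥0} Π_k C_k`: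
    (∀ P : Measure ℝ≥0∞, IsProbabilityMeasure P → P {∞} = 0 →
      IsPerpetuityFixedPoint (μ.map fun ω => (C 0 ω, T 0 ω)) P →
      ∀ t : ℝ≥0∞,
        μ {ω | t < ∑' k : ℕ, (∏ j ∈ Finset.range k, T j ω) * C k ω} ≤ P {x | t < x})
    ∧ ((∃ P : Measure ℝ≥0∞, IsProbabilityMeasure P ∧ P {∞} = 0 ∧
          IsPerpetuityFixedPoint (μ.map fun ω => (C 0 ω, T 0 ω)) P)
        ↔ (∀ᵐ ω ∂μ, (∑' k : ℕ, (∏ j ∈ Finset.range k, T j ω) * C k ω) < ∞)) := by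
  have : IsProbabilityMeasure (μ.map fun ω => (C 0 ω, T 0 ω)) :=
    Measure.isProbabilityMeasure_map (hmeas 0).aemeasurable
  refine ⟨fun P _ _ hP t => ?_, fun ⟨P, _, hPtop, hP⟩ => ?_, fun hfin => ?_⟩
  · exact measure_lt_perpetuitySum_le hmeas hindep hident
      ((isPerpetuityFixedPoint_iff _ P).mp hP) t
  · exact ae_perpetuitySum_lt_top hmeas hindep hident
      ((isPerpetuityFixedPoint_iff _ P).mp hP) hPtop
  · have hW : Measurable fun ω => perpetuitySum fun k => (C k ω, T k ω) :=
      measurable_perpetuitySum.comp (measurable_pi_lambda _ hmeas)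
    have : IsProbabilityMeasure (μ.map fun ω => perpetuitySum fun k => (C k ω, T k ω)) :=
      Measure.isProbabilityMeasure_map hW.aemeasurable
    refine ⟨_, this, ?_, (isPerpetuityFixedPoint_iff _ _).mpr
      (perpetuityMap_map_perpetuitySum hmeas hindep hident)⟩
    rw [Measure.map_apply hW (measurableSet_singleton ∞)]
    exact measure_eq_zero_iff_ae_notMem.mpr (hfin.mono fun ω hω => hω.ne)

theorem perpetuity_fixed_points
    {Ω : Type*} [MeasurableSpace Ω] (μ : Measure Ω) [IsProbabilityMeasure μ]
    -- i.i.d. copies `(C_k, T_{1,k})` of the pair `(C, T₁)`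
    (C T : ℕ → Ω → ℝ≥0∞)
    (hmeas : ∀ k, Measurable fun ω => (C k ω, T k ω))
    (hindep : iIndepFun (fun k ω => (C k ω, T k ω)) μ)
    (hident : ∀ k, IdentDistrib (fun ω => (C k ω, T k ω)) (fun ω => (C 0 ω, T 0 ω)) μ μ)
    -- non-degeneracy: `P(T₁ = 1, C = 0) < 1`
    (hnondeg : μ {ω | T 0 ω = 1 ∧ C 0 ω = 0} < 1) :
    -- with `Π_k = T_{1,0} ⋯ T_{1,k-1}` and `W* = Σ_{k≥0} Π_k C_k`:
    (∀ P : Measure ℝ≥0∞, IsProbabilityMeasure P → P {∞} = 0 →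
      IsPerpetuityFixedPoint (μ.map fun ω => (C 0 ω, T 0 ω)) P →
      ∀ t : ℝ≥0∞,
        μ {ω | t < ∑' k : ℕ, (∏ j ∈ Finset.range k, T j ω) * C k ω} ≤ P {x | t < x})
    ∧ ((∃ P : Measure ℝ≥0∞, IsProbabilityMeasure P ∧ P {∞} = 0 ∧
          IsPerpetuityFixedPoint (μ.map fun ω => (C 0 ω, T 0 ω)) P)
        ↔ (∀ᵐ ω ∂μ, (∑' k : ℕ, (∏ j ∈ Finset.range k, T j ω) * C k ω) < ∞)) :=
  perpetuity_fixed_points_general μ C T hmeas hindep hident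
end
end
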